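/- arXiv:1510.03688 — 4 statements merged into one kernel-verified Lean document; each statement's English description precedes it below -/
import Mathlib

section
/- Let M be a local Moufang set with fixed non-equivalent points 0 and ∞, and let x be a point with x not equivalent to ∞, with α_x the unique element of U_∞ mapping 0 to x. Then the following are equivalent: (1) x is a unit (i.e. x is not equivalent to 0 and not equivalent to ∞); (2) the permutation induced by α_x on equivalence classes does not fix the class of 0; (3) the induced permutation of α_x does not fix any equivalence class other than the class of ∞. -/
open Equiv

structure LocalMoufangSet (X : Type*) where
  r : X → X → Prop
  requiv : Equivalence r
  U : X → Subgroup (Equiv.Perm X)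
  preserves : ∀ x : X, ∀ u ∈ U x, ∀ a b : X, r a b ↔ r (u a) (u b)
  big : ∃ a b c : X, ¬ r a b ∧ ¬ r b c ∧ ¬ r a c
  lm1 : ∀ x y : X, r x y → ∀ u ∈ U x, ∃ v ∈ U y, ∀ z : X, r (u z) (v z)
  lm2_fix : ∀ x : X, ∀ u ∈ U x, u x = x
  lm2_trans : ∀ x y z : X, ¬ r y x → ¬ r z x → ∃! u : Equiv.Perm X, u ∈ U x ∧ u y = z
  lm2'_trans : ∀ x y z : X, ¬ r y x → ¬ r z x → ∃ u ∈ U x, r (u y) z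
  lm2'_free : ∀ x : X, ∀ u ∈ U x, ∀ y : X, ¬ r y x → r (u y) y → ∀ z : X, r (u z) z
  lm3 : ∀ x : X, ∀ g ∈ (⨆ y : X, U y : Subgroup (Equiv.Perm X)),
      (U x).map (MulAut.conj g).toMonoidHom = U (g x)

namespace LocalMoufangSet

variable {X : Type*} (M : LocalMoufangSet X)

/-- The little projective group. -/
def G : Subgroup (Equiv.Perm X) := ⨆ x : X, M.U x

/-- `x` is a unit with respect to the base points `o` (zero) and `ι` (infinity). -/
def IsUnitPt (o ι x : X) : Prop := ¬ M.r x o ∧ ¬ M.r x ι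

/-- `μ` is the μ-map of `x`: it lies in the double coset `U_0 α_x U_0` and swaps `o` and `ι`.
(We use the left-action convention: a right product `g α h` corresponds to `h * α * g`.) -/
def IsMuMap (o ι x : X) (μ : Equiv.Perm X) : Prop :=
  μ o = ι ∧ μ ι = o ∧
    ∃ a ∈ M.U ι, a o = x ∧ ∃ g ∈ M.U o, ∃ h ∈ M.U o, μ = h * a * g

/-- Specialness with respect to a μ-map `τ`: `(-x)τ = -(xτ)` for all units `x`. -/
def Special (o ι : X) (τ : Equiv.Perm X) : Prop :=
  ∀ z : X, IsUnitPt M o ι z → ∀ a ∈ M.U ι, a o = z → ∀ b ∈ M.U ι, b o = τ z →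
    τ (a⁻¹ o) = b⁻¹ o

theorem forall_not_r_apply_self_iff {ι y : X} {u : Equiv.Perm X} (hu : u ∈ M.U ι)
    (hy : ¬ M.r y ι) : (∀ z : X, ¬ M.r z ι → ¬ M.r (u z) z) ↔ ¬ M.r (u y) y :=
  ⟨fun h => h y hy, fun hyu z hzι hz => hyu (M.lm2'_free ι u hu z hzι hz y)⟩

end LocalMoufangSet

/-- characterizations of units. -/
theorem stmt2 {X : Type*} (M : LocalMoufangSet X) (o ι : X) (h0 : ¬ M.r o ι)
    (x : X) (hx : ¬ M.r x ι)
    (α : Equiv.Perm X) (hαU : α ∈ M.U ι) (hαo : α o = x) :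
    (M.IsUnitPt o ι x ↔ ¬ M.r (α o) o) ∧
    (M.IsUnitPt o ι x ↔ ∀ z : X, ¬ M.r z ι → ¬ M.r (α z) z) := by
  have unit_iff : M.IsUnitPt o ι x ↔ ¬ M.r (α o) o := by
    rw [hαo]
    exact and_iff_left hx
  exact ⟨unit_iff, unit_iff.trans (M.forall_not_r_apply_self_iff hαU h0).symm⟩
end

section
/- Let M be a local Moufang set with fixed non-equivalent points 0 and ∞. For each unit x in X, there is a unique element μ_x in the double coset U_0 α_x U_0 such that 0·μ_x = ∞ and ∞·μ_x = 0; moreover μ_x = g α_x h where g is the unique element of U_0 mapping ∞ to -x and h is the unique element of U_0 mapping x to ∞, and both g and h lie in U_0 \ U_0°, where U_0° is the kernel of the map from U_0 to its induced action on equivalence classes. -/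
open Equiv

namespace LocalMoufangSet

variable {X : Type*} (M : LocalMoufangSet X)

theorem r_inv_apply_iff {x : X} {u : Perm X} (hu : u ∈ M.U x) (a b : X) :
    M.r (u⁻¹ a) b ↔ M.r a (u b) := by
  simpa using M.preserves x u hu (u⁻¹ a) b

theorem isUnitPt_inv_apply {o ι : X} (h0 : ¬ M.r o ι) {α : Perm X} (hα : α ∈ M.U ι)
    (hx : M.IsUnitPt o ι (α o)) : M.IsUnitPt o ι (α⁻¹ o) := by
  refine ⟨fun hr => hx.1 (M.requiv.symm ?_), fun hr => h0 ?_⟩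
  · exact (M.r_inv_apply_iff hα o o).1 hr
  · simpa [M.lm2_fix ι α hα] using (M.r_inv_apply_iff hα o ι).1 hr

theorem mul_mul_swaps_iff {o ι : X} {g h : Perm X} (hg : g ∈ M.U o) (hh : h ∈ M.U o)
    (α : Perm X) :
    ((h * α * g) o = ι ∧ (h * α * g) ι = o) ↔ (h (α o) = ι ∧ g ι = α⁻¹ o) := by
  have hgo : g o = o := M.lm2_fix o g hg
  have hho : h o = o := M.lm2_fix o h hh
  refine and_congr (by simp [hgo]) ?_
  calc (h * α * g) ι = o ↔ h (α (g ι)) = h o := by simp [hho]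
    _ ↔ g ι = α⁻¹ o := by rw [h.apply_eq_iff_eq, Perm.eq_inv_iff_eq]

end LocalMoufangSet

/-- Left-action convention: the right product `g α_x h` is `h * α * g`.
`g ∈ U_0 \ U_0°` is encoded as `∃ z, ¬ r (g z) z`. -/
theorem stmt3 {X : Type*} (M : LocalMoufangSet X) (o ι : X) (h0 : ¬ M.r o ι)
    (x : X) (hx : M.IsUnitPt o ι x)
    (α : Equiv.Perm X) (hαU : α ∈ M.U ι) (hαo : α o = x) :
    (∃! μ : Equiv.Perm X,
      (∃ g ∈ M.U o, ∃ h ∈ M.U o, μ = h * α * g) ∧ μ o = ι ∧ μ ι = o) ∧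
    (∀ g h : Equiv.Perm X, g ∈ M.U o → h ∈ M.U o → g ι = α⁻¹ o → h x = ι →
      (((h * α * g) o = ι ∧ (h * α * g) ι = o) ∧
        (∃ z, ¬ M.r (g z) z) ∧ (∃ z, ¬ M.r (h z) z))) := by
  subst hαo
  have hι0 : ¬ M.r ι o := fun hr => h0 (M.requiv.symm hr)
  have hneg := M.isUnitPt_inv_apply h0 hαU hx
  obtain ⟨g₀, ⟨hg₀, hg₀ι⟩, hg₀_unique⟩ := M.lm2_trans o ι (α⁻¹ o) hι0 hneg.1
  obtain ⟨h₀, ⟨hh₀, hh₀x⟩, hh₀_unique⟩ := M.lm2_trans o (α o) ι hx.1 hι0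
  refine ⟨⟨h₀ * α * g₀, ⟨⟨g₀, hg₀, h₀, hh₀, rfl⟩, (M.mul_mul_swaps_iff hg₀ hh₀ α).2 ⟨hh₀x, hg₀ι⟩⟩,
    ?_⟩, ?_⟩
  · rintro μ ⟨⟨g, hg, h, hh, rfl⟩, hswap⟩
    obtain ⟨hhx, hgι⟩ := (M.mul_mul_swaps_iff hg hh α).1 hswap
    rw [hg₀_unique g ⟨hg, hgι⟩, hh₀_unique h ⟨hh, hhx⟩]
  · intro g h hg hh hgι hhx
    refine ⟨(M.mul_mul_swaps_iff hg hh α).2 ⟨hhx, hgι⟩, ⟨ι, ?_⟩, ⟨α o, ?_⟩⟩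
    · rw [hgι]; exact hneg.2
    · rw [hhx]; exact fun hr => hx.2 (M.requiv.symm hr)
end

section
/- In a local Moufang set with fixed non-equivalent points 0, ∞ and fixed μ-map τ, for every unit x we have μ_{xτ} = τ^{-1} μ_{-x} τ (i.e., μ_{xτ} is the conjugate of μ_{-x} by τ). -/
open Equiv

namespace LocalMoufangSet

variable {X : Type*} (M : LocalMoufangSet X) {o ι : X}

lemma mem_G_of_mem_U {x : X} {u : Equiv.Perm X} (hu : u ∈ M.U x) : u ∈ M.G :=
  le_iSup M.U x hu

lemma r_iff_r_apply_of_mem_G {g : Equiv.Perm X} (hg : g ∈ M.G) (a b : X) :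
    M.r a b ↔ M.r (g a) (g b) := by
  induction hg using Subgroup.iSup_induction' generalizing a b with
  | hp x u hu => exact M.preserves x u hu a b
  | h1 => rfl
  | hmul u v _ _ hu hv => rw [hv a b, hu (v a) (v b)]; rfl

lemma conj_mem_U {x : X} {g u : Equiv.Perm X} (hg : g ∈ M.G) (hu : u ∈ M.U x) :
    g * u * g⁻¹ ∈ M.U (g x) := by
  rw [← M.lm3 x g hg]
  exact Subgroup.mem_map.mpr ⟨u, hu, by simp⟩

lemma eq_of_mem_U_of_apply_eq {x y : X} {u v : Equiv.Perm X} (hu : u ∈ M.U x) (hv : v ∈ M.U x)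
    (hy : ¬ M.r y x) (huv : u y = v y) : u = v := by
  have huy : ¬ M.r (u y) x := by rwa [← M.lm2_fix x u hu, ← M.preserves x u hu]
  obtain ⟨w, -, hw⟩ := M.lm2_trans x y (u y) hy huy
  rw [hw u ⟨hu, rfl⟩, hw v ⟨hv, huv.symm⟩]

lemma mul_mul_mem_G {h a g : Equiv.Perm X} (hh : h ∈ M.U o) (ha : a ∈ M.U ι) (hg : g ∈ M.U o) :
    h * a * g ∈ M.G :=
  mul_mem (mul_mem (M.mem_G_of_mem_U hh) (M.mem_G_of_mem_U ha)) (M.mem_G_of_mem_U hg)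

lemma IsMuMap.mem_G {y : X} {μ : Equiv.Perm X} (hμ : M.IsMuMap o ι y μ) : μ ∈ M.G := by
  obtain ⟨-, -, a, ha, -, g, hg, h, hh, rfl⟩ := hμ
  exact M.mul_mul_mem_G hh ha hg

lemma apply_factors_of_swap {h a g : Equiv.Perm X} (hh : h ∈ M.U o) (hg : g ∈ M.U o)
    (hμo : (h * a * g) o = ι) (hμι : (h * a * g) ι = o) :
    h (a o) = ι ∧ g ι = a⁻¹ o := by
  refine ⟨by simpa [M.lm2_fix o g hg] using hμo, ?_⟩
  rw [Equiv.Perm.eq_inv_iff_eq]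
  apply h.injective
  simpa [M.lm2_fix o h hh] using hμι

lemma mu_unique (h0 : ¬ M.r o ι) {y : X} (hyo : ¬ M.r y o) {μ μ' : Equiv.Perm X}
    (hμ : M.IsMuMap o ι y μ) (hμ' : M.IsMuMap o ι y μ') : μ = μ' := by
  obtain ⟨hμo, hμι, a, ha, hay, g, hg, h, hh, rfl⟩ := hμ
  obtain ⟨hμo', hμι', a', ha', hay', g', hg', h', hh', rfl⟩ := hμ'
  have hιo : ¬ M.r ι o := fun hc => h0 (M.requiv.symm hc)
  obtain rfl : a = a' := M.eq_of_mem_U_of_apply_eq ha ha' h0 (hay.trans hay'.symm)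
  obtain ⟨hhy, hgι⟩ := M.apply_factors_of_swap hh hg hμo hμι
  obtain ⟨hhy', hgι'⟩ := M.apply_factors_of_swap hh' hg' hμo' hμι'
  obtain rfl : h = h' := by
    rw [hay] at hhy hhy'
    exact M.eq_of_mem_U_of_apply_eq hh hh' hyo (hhy.trans hhy'.symm)
  obtain rfl : g = g' := M.eq_of_mem_U_of_apply_eq hg hg' hιo (hgι.trans hgι'.symm)
  rfl

/-- `μ_y^τ = μ_{(-y)τ}`, where `-y = a⁻¹ o`. -/
lemma IsMuMap.conj (h0 : ¬ M.r o ι) {τ μ a : Equiv.Perm X} {y : X} (hτ : τ ∈ M.G)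
    (hτo : τ o = ι) (hτι : τ ι = o) (hμ : M.IsMuMap o ι y μ) (ha : a ∈ M.U ι) (hay : a o = y) :
    M.IsMuMap o ι (τ (a⁻¹ o)) (τ * μ * τ⁻¹) := by
  obtain ⟨hμo, hμι, a', ha', ha'y, g, hg, h, hh, rfl⟩ := hμ
  obtain rfl : a' = a := M.eq_of_mem_U_of_apply_eq ha' ha h0 (ha'y.trans hay.symm)
  let ν := τ * (h * a' * g) * τ⁻¹
  have hτ_inv_o : τ⁻¹ o = ι := by rw [Equiv.Perm.inv_eq_iff_eq, hτι]
  have hτ_inv_ι : τ⁻¹ ι = o := by rw [Equiv.Perm.inv_eq_iff_eq, hτo]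
  have hνo : ν o = ι := by rw [Equiv.Perm.mul_apply, Equiv.Perm.mul_apply, hτ_inv_o, hμι, hτo]
  have hνι : ν ι = o := by rw [Equiv.Perm.mul_apply, Equiv.Perm.mul_apply, hτ_inv_ι, hμo, hτι]
  have hνG : ν ∈ M.G := mul_mem (mul_mem hτ (M.mul_mul_mem_G hh ha' hg)) (inv_mem hτ)
  have hν_inv_ι : ν⁻¹ ι = o := by rw [Equiv.Perm.inv_eq_iff_eq, hνo]
  have hgι := (M.apply_factors_of_swap hh hg hμo hμι).2
  -- `h a g = (a g) (μ⁻¹ h μ)`, and conjugation by `τ` interchanges `U o` and `U ι`.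
  refine ⟨hνo, hνι, τ * g * τ⁻¹, hτo ▸ M.conj_mem_U hτ hg, ?_, ν⁻¹ * (τ * h * τ⁻¹) * ν,
    hν_inv_ι ▸ inv_inv ν ▸ M.conj_mem_U (inv_mem hνG) (hτo ▸ M.conj_mem_U hτ hh),
    τ * a' * τ⁻¹, hτι ▸ M.conj_mem_U hτ ha', by simp only [ν]; group⟩
  rw [Equiv.Perm.mul_apply, Equiv.Perm.mul_apply, hτ_inv_o, hgι]

end LocalMoufangSet

/-- In the left-action convention the conjugate `τ⁻¹ μ_{-x} τ` becomes `τ * μ_{-x} * τ⁻¹`. -/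
theorem stmt5_general {X : Type*} (M : LocalMoufangSet X) (o ι : X) (h0 : ¬ M.r o ι)
    (e : X)
    (τ : Equiv.Perm X) (hτ : M.IsMuMap o ι e τ)
    (x : X) (hx : M.IsUnitPt o ι x)
    (α : Equiv.Perm X) (hαU : α ∈ M.U ι) (hαo : α o = x)
    (μxt μnx : Equiv.Perm X)
    (hμxt : M.IsMuMap o ι (τ x) μxt)
    (hμnx : M.IsMuMap o ι (α⁻¹ o) μnx) :
    μxt = τ * μnx * τ⁻¹ := by
  have hτG := hτ.mem_G
  have hν := hμnx.conj M h0 hτG hτ.1 hτ.2.1 (inv_mem hαU) rfl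
  rw [inv_inv, hαo] at hν
  have hτx : ¬ M.r (τ x) o := by
    rw [← hτ.2.1, ← M.r_iff_r_apply_of_mem_G hτG]
    exact hx.2
  exact M.mu_unique h0 hτx hμxt hν

/-- `μ_{xτ} = μ_{-x}^τ`.  In the left-action convention the
conjugate `τ⁻¹ μ_{-x} τ` (right convention) becomes `τ * μ_{-x} * τ⁻¹`. -/
theorem stmt5 {X : Type*} (M : LocalMoufangSet X) (o ι : X) (h0 : ¬ M.r o ι)
    (e : X) (he : M.IsUnitPt o ι e)
    (τ : Equiv.Perm X) (hτ : M.IsMuMap o ι e τ)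
    (x : X) (hx : M.IsUnitPt o ι x)
    (α : Equiv.Perm X) (hαU : α ∈ M.U ι) (hαo : α o = x)
    (μxt μnx : Equiv.Perm X)
    (hμxt : M.IsMuMap o ι (τ x) μxt)
    (hμnx : M.IsMuMap o ι (α⁻¹ o) μnx) :
    μxt = τ * μnx * τ⁻¹ :=
  stmt5_general M o ι h0 e τ hτ x hx α hαU hαo μxt μnx hμxt hμnx
end

section
/- Let x be a unit in a special local Moufang set. Then: (1) (-y)μ_x = -(yμ_x) for every unit y; (2) -x = xμ_x = xμ_{-x}; (3) μ_{-x} = α_x μ_{-x} α_x μ_{-x} α_x. -/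
open Equiv

namespace LMSAux

open LocalMoufangSet

variable {X : Type*} {M : LocalMoufangSet X}

lemma rsymm {a b : X} (h : M.r a b) : M.r b a := M.requiv.symm h

lemma mem_G {x : X} {u : Perm X} (hu : u ∈ M.U x) : u ∈ M.G :=
  Subgroup.mem_iSup_of_mem x hu

lemma inv_val {u : Perm X} {p q : X} (h : u p = q) : u⁻¹ q = p := by
  rw [← h]
  exact Equiv.symm_apply_apply u p

lemma G_pres {g : Perm X} (hg : g ∈ M.G) : ∀ a b : X, M.r a b ↔ M.r (g a) (g b) := by
  refine Subgroup.iSup_induction (C := fun gg => ∀ a b : X, M.r a b ↔ M.r (gg a) (gg b))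
    M.U hg (fun x u hu => M.preserves x u hu) (by simp) ?_
  intro u v hu hv a b
  simp only [Perm.mul_apply]
  exact (hv a b).trans (hu (v a) (v b))

lemma fix_inv {p : X} {u : Perm X} (hu : u ∈ M.U p) : u⁻¹ p = p :=
  inv_val (M.lm2_fix p u hu)

/-- Uniqueness of elements of `U p` by their value at a point `q` with `¬ r q p`. -/
lemma uniq {p q : X} (hq : ¬ M.r q p) {u v : Perm X} (hu : u ∈ M.U p) (hv : v ∈ M.U p)
    (h : u q = v q) : u = v := by
  have hq2 : ¬ M.r (u q) p := by
    intro hc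
    apply hq
    have hiff := M.preserves p u hu q p
    rw [M.lm2_fix p u hu] at hiff
    exact hiff.mpr hc
  obtain ⟨w, -, huniq⟩ := M.lm2_trans p q (u q) hq hq2
  exact (huniq u ⟨hu, rfl⟩).trans (huniq v ⟨hv, h.symm⟩).symm

lemma conj_mem {g : Perm X} (hg : g ∈ M.G) {p : X} {u : Perm X} (hu : u ∈ M.U p) :
    g * u * g⁻¹ ∈ M.U (g p) := by
  rw [← M.lm3 p g hg]
  exact ⟨u, hu, by simp [MulAut.conj_apply]⟩

lemma muMap_mem_G {o ι w : X} {μ : Perm X} (hμ : M.IsMuMap o ι w μ) : μ ∈ M.G := by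
  obtain ⟨-, -, a, haU, -, g, hgU, h, hhU, rfl⟩ := hμ
  exact mul_mem (mul_mem (mem_G hhU) (mem_G haU)) (mem_G hgU)

section
variable {o ι : X} (h0 : ¬ M.r o ι)

include h0

lemma neg_unit {w : X} (hw : M.IsUnitPt o ι w) {aw : Perm X} (hawU : aw ∈ M.U ι)
    (hawo : aw o = w) : M.IsUnitPt o ι (aw⁻¹ o) := by
  constructor
  · intro hc
    have hiff := M.preserves ι aw hawU (aw⁻¹ o) o
    rw [show ∀ y, aw (aw⁻¹ y) = y from aw.apply_symm_apply, hawo] at hiff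
    exact hw.1 (rsymm (hiff.mp hc))
  · intro hc
    have hiff := M.preserves ι aw hawU (aw⁻¹ o) ι
    rw [show ∀ y, aw (aw⁻¹ y) = y from aw.apply_symm_apply, M.lm2_fix ι aw hawU] at hiff
    exact h0 (hiff.mp hc)

/-- the "dual minus" lemma: if `g ∈ U o` sends `ι` to `-w`, then `g⁻¹` sends `ι` to `w`. -/
lemma dual_neg {e : X} {τ : Perm X} (hτ : M.IsMuMap o ι e τ) (hsp : M.Special o ι τ)
    {w : X} (hw : M.IsUnitPt o ι w) {aw : Perm X} (hawU : aw ∈ M.U ι) (hawo : aw o = w)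
    {g : Perm X} (hg : g ∈ M.U o) (hgι : g ι = aw⁻¹ o) : g⁻¹ ι = w := by
  have hτo : τ o = ι := hτ.1
  have hτι : τ ι = o := hτ.2.1
  have hτG : τ ∈ M.G := muMap_mem_G hτ
  have hτ'ι : τ⁻¹ ι = o := inv_val hτo
  have hnw := neg_unit h0 hw hawU hawo
  have hι0 : ¬ M.r ι o := fun hc => h0 (rsymm hc)
  set z := τ⁻¹ (aw⁻¹ o) with hz
  have hτz : τ z = aw⁻¹ o := by rw [hz]; simp
  have hzι : ¬ M.r z ι := by
    intro hc
    have := (G_pres hτG z ι).mp hc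
    rw [hτz, hτι] at this
    exact hnw.1 this
  have hzo : ¬ M.r z o := by
    intro hc
    have := (G_pres hτG z o).mp hc
    rw [hτz, hτo] at this
    exact hnw.2 this
  obtain ⟨az, ⟨hazU, hazo⟩, -⟩ := M.lm2_trans ι o z h0 hzι
  have hconjU : τ * az * τ⁻¹ ∈ M.U o := by
    have := conj_mem hτG hazU
    rwa [hτι] at this
  have hgτ : g = τ * az * τ⁻¹ := by
    refine uniq hι0 hg hconjU ?_
    rw [hgι]
    simp only [Perm.mul_apply]
    rw [hτ'ι, hazo, hτz]
  have hspz := hsp z ⟨hzo, hzι⟩ az hazU hazo aw⁻¹ (inv_mem hawU) hτz.symm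
  rw [inv_inv, hawo] at hspz
  rw [hgτ]
  simp only [mul_inv_rev, inv_inv, Perm.mul_apply]
  rw [hτ'ι]
  exact hspz

/-- Structure of μ-maps in a special local Moufang set: `μ_w = g α_w g` and `w μ_w = -w`. -/
lemma struct {e : X} {τ : Perm X} (hτ : M.IsMuMap o ι e τ) (hsp : M.Special o ι τ)
    {w : X} (hw : M.IsUnitPt o ι w) {aw : Perm X} (hawU : aw ∈ M.U ι) (hawo : aw o = w)
    {μ : Perm X} (hμ : M.IsMuMap o ι w μ) :
    ∃ g ∈ M.U o, μ = g * aw * g ∧ g w = ι ∧ g ι = aw⁻¹ o ∧ μ w = aw⁻¹ o := by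
  obtain ⟨hμo, hμι, a, haU, hao, g1, hg1U, h1, hh1U, hprod⟩ := hμ
  have hι0 : ¬ M.r ι o := fun hc => h0 (rsymm hc)
  have ha : a = aw := uniq h0 haU hawU (hao.trans hawo.symm)
  rw [ha] at hprod
  have hg1o : g1 o = o := M.lm2_fix o g1 hg1U
  have hawι : aw ι = ι := M.lm2_fix ι aw hawU
  have hh1w : h1 w = ι := by
    rw [hprod] at hμo
    simp only [Perm.mul_apply] at hμo
    rwa [hg1o, hawo] at hμo
  have h2 : aw (g1 ι) = o := by
    rw [hprod] at hμι
    simp only [Perm.mul_apply] at hμι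
    calc aw (g1 ι) = h1⁻¹ (h1 (aw (g1 ι))) := by simp
    _ = h1⁻¹ o := by rw [hμι]
    _ = o := fix_inv hh1U
  have hg1ι : g1 ι = aw⁻¹ o := (inv_val h2).symm
  have hg1inv : g1⁻¹ ι = w := dual_neg h0 hτ hsp hw hawU hawo hg1U hg1ι
  have hh1inv : h1⁻¹ ι = w := inv_val hh1w
  have hhg : h1 = g1 := by
    have : h1⁻¹ = g1⁻¹ :=
      uniq hι0 (inv_mem hh1U) (inv_mem hg1U) (hh1inv.trans hg1inv.symm)
    exact inv_injective this
  rw [hhg] at hprod hh1w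
  refine ⟨g1, hg1U, hprod, hh1w, hg1ι, ?_⟩
  rw [hprod]
  simp only [Perm.mul_apply]
  rw [hh1w, hawι, hg1ι]

/-- μ-maps respect the minus map (Statement 15 (1), for an arbitrary μ-map). -/
lemma mu_special {e : X} {τ : Perm X} (hτ : M.IsMuMap o ι e τ) (hsp : M.Special o ι τ)
    {w : X} {μ : Perm X} (hμ : M.IsMuMap o ι w μ) {y : X} (hy : M.IsUnitPt o ι y)
    {ay : Perm X} (hayU : ay ∈ M.U ι) (hayo : ay o = y)
    {b : Perm X} (hbU : b ∈ M.U ι) (hbo : b o = μ y) : μ (ay⁻¹ o) = b⁻¹ o := by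
  have hτo : τ o = ι := hτ.1
  have hτι : τ ι = o := hτ.2.1
  have hτG : τ ∈ M.G := muMap_mem_G hτ
  have hμG : μ ∈ M.G := muMap_mem_G hμ
  have hτ'ι : τ⁻¹ ι = o := inv_val hτo
  have hτ'o : τ⁻¹ o = ι := inv_val hτι
  set k := μ * τ⁻¹ with hk
  have hkG : k ∈ M.G := mul_mem hμG (inv_mem hτG)
  have hko : k o = o := by
    simp only [hk, Perm.mul_apply]
    rw [hτ'o, hμ.2.1]
  have hkι : k ι = ι := by
    simp only [hk, Perm.mul_apply]
    rw [hτ'ι, hμ.1]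
  have hkinvo : k⁻¹ o = o := inv_val hko
  have hkτ : ∀ t : X, k (τ t) = μ t := by
    intro t
    simp [hk, Perm.mul_apply]
  have hτyι : ¬ M.r (τ y) ι := by
    intro hc
    rw [← hτo] at hc
    exact hy.1 ((G_pres hτG y o).mpr hc)
  obtain ⟨c0, ⟨hc0U, hc0o⟩, -⟩ := M.lm2_trans ι o (τ y) h0 hτyι
  have hspy : τ (ay⁻¹ o) = c0⁻¹ o := hsp y hy ay hayU hayo c0 hc0U hc0o
  have hcU : k * c0 * k⁻¹ ∈ M.U ι := by
    have := conj_mem hkG hc0U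
    rwa [hkι] at this
  have hco : (k * c0 * k⁻¹) o = μ y := by
    simp only [Perm.mul_apply]
    rw [hkinvo, hc0o, hkτ]
  have hcb : k * c0 * k⁻¹ = b := uniq h0 hcU hbU (hco.trans hbo.symm)
  have hgoal : μ (ay⁻¹ o) = (k * c0 * k⁻¹)⁻¹ o := by
    simp only [mul_inv_rev, inv_inv, Perm.mul_apply]
    rw [hkinvo, ← hkτ (ay⁻¹ o), hspy]
  rw [hgoal, hcb]

end

end LMSAux


/-- basic identities in a special local Moufang set.
Left-action convention: the palindromic right product
`α_x μ_{-x} α_x μ_{-x} α_x` is `α * μnx * α * μnx * α`. -/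
theorem stmt15 {X : Type*} (M : LocalMoufangSet X) (o ι : X) (h0 : ¬ M.r o ι)
    (e : X) (he : M.IsUnitPt o ι e)
    (τ : Equiv.Perm X) (hτ : M.IsMuMap o ι e τ)
    (hsp : M.Special o ι τ)
    (x : X) (hx : M.IsUnitPt o ι x)
    (α : Equiv.Perm X) (hαU : α ∈ M.U ι) (hαo : α o = x)
    (μx μnx : Equiv.Perm X)
    (hμx : M.IsMuMap o ι x μx) (hμnx : M.IsMuMap o ι (α⁻¹ o) μnx) :
    -- (1) (-y)μ_x = -(yμ_x) for all units y
    (∀ y : X, M.IsUnitPt o ι y → ∀ ay ∈ M.U ι, ay o = y →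
      ∀ b ∈ M.U ι, b o = μx y → μx (ay⁻¹ o) = b⁻¹ o) ∧
    -- (2) -x = xμ_x = xμ_{-x}
    (α⁻¹ o = μx x ∧ α⁻¹ o = μnx x) ∧
    -- (3) μ_{-x} = α_x μ_{-x} α_x μ_{-x} α_x
    (μnx = α * μnx * α * μnx * α) := by
  classical
  obtain ⟨g, hgU, hμxeq, hgx, hgι, hμxx⟩ := LMSAux.struct h0 hτ hsp hx hαU hαo hμx
  have hnx : M.IsUnitPt o ι (α⁻¹ o) := LMSAux.neg_unit h0 hx hαU hαo
  have hαinvU : α⁻¹ ∈ M.U ι := inv_mem hαU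
  -- part (2b): μnx x = α⁻¹ o
  obtain ⟨g2, hg2U, hμnxeq, hg2w, hg2ι, hμnxw⟩ :=
    LMSAux.struct h0 hτ hsp hnx hαinvU rfl hμnx
  have hμnxw' : μnx (α⁻¹ o) = α o := by rw [hμnxw, inv_inv]
  have h2b : α⁻¹ o = μnx x := by
    have := LMSAux.mu_special h0 hτ hsp hμnx hnx hαinvU rfl hαU hμnxw'.symm
    rw [inv_inv, hαo] at this
    exact this.symm
  -- part (3)
  have hαι : α ι = ι := M.lm2_fix ι α hαU
  set ρ := α * g * α with hρ
  have hρo : ρ o = ι := by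
    simp only [hρ, Equiv.Perm.mul_apply]
    rw [hαo, hgx, hαι]
  have hρι : ρ ι = o := by
    simp only [hρ, Equiv.Perm.mul_apply]
    rw [hαι, hgι]
    exact Equiv.apply_symm_apply α o
  have hρG : ρ ∈ M.G :=
    mul_mem (mul_mem (LMSAux.mem_G hαU) (LMSAux.mem_G hgU)) (LMSAux.mem_G hαU)
  have hρ'ι : ρ⁻¹ ι = o := LMSAux.inv_val hρo
  have hρ'o : ρ⁻¹ o = ι := LMSAux.inv_val hρι
  have huU : ρ⁻¹ * α * ρ ∈ M.U o := by
    have := LMSAux.conj_mem (inv_mem hρG) hαU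
    rwa [inv_inv, hρ'ι] at this
  have hcU : ρ⁻¹ * g * ρ ∈ M.U ι := by
    have := LMSAux.conj_mem (inv_mem hρG) hgU
    rwa [inv_inv, hρ'o] at this
  have hρeq : ρ = (ρ⁻¹ * α * ρ) * (ρ⁻¹ * g * ρ) * (ρ⁻¹ * α * ρ) := by
    simp only [hρ]
    group
  set c := ρ⁻¹ * g * ρ with hc
  have hρc : ρ (c o) = α⁻¹ o := by
    simp only [hc, Equiv.Perm.mul_apply]
    rw [show ∀ y, ρ (ρ⁻¹ y) = y from ρ.apply_symm_apply, hρo]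
    exact hgι
  have hpunit : M.IsUnitPt o ι (c o) := by
    constructor
    · intro hcon
      have := (LMSAux.G_pres hρG (c o) o).mp hcon
      rw [hρc, hρo] at this
      exact hnx.2 this
    · intro hcon
      have := (LMSAux.G_pres hρG (c o) ι).mp hcon
      rw [hρc, hρι] at this
      exact hnx.1 this
  have hρμ : M.IsMuMap o ι (c o) ρ :=
    ⟨hρo, hρι, c, hcU, rfl, ρ⁻¹ * α * ρ, huU, ρ⁻¹ * α * ρ, huU, hρeq⟩
  obtain ⟨g3, hg3U, hρeq2, hg3p, hg3ι, hρp2⟩ := LMSAux.struct h0 hτ hsp hpunit hcU rfl hρμ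
  have hcα : c = α := by
    have hinv : c⁻¹ = α⁻¹ :=
      LMSAux.uniq h0 (inv_mem hcU) (inv_mem hαU) (hρp2.symm.trans hρc)
    exact inv_injective hinv
  have hg3g : g3 = g := by
    rw [hcα, hαo] at hg3p
    exact LMSAux.uniq hx.1 hg3U hgU (hg3p.trans hgx.symm)
  have hμxρ : μx = ρ := by rw [hμxeq, hρeq2, hg3g, hcα]
  have hμxinvμ : M.IsMuMap o ι (α⁻¹ o) μx⁻¹ := by
    refine ⟨LMSAux.inv_val hμx.2.1, LMSAux.inv_val hμx.1, α⁻¹, hαinvU, rfl,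
      g⁻¹, inv_mem hgU, g⁻¹, inv_mem hgU, ?_⟩
    rw [hμxeq]
    group
  obtain ⟨g4, hg4U, hμxinveq, hg4w, -, -⟩ :=
    LMSAux.struct h0 hτ hsp hnx hαinvU rfl hμxinvμ
  have hg24 : g2 = g4 := LMSAux.uniq hnx.1 hg2U hg4U (hg2w.trans hg4w.symm)
  have hμnxμxinv : μnx = μx⁻¹ := by rw [hμnxeq, hμxinveq, hg24]
  have hform1 : μnx = α⁻¹ * g⁻¹ * α⁻¹ := by
    rw [hμnxμxinv, hμxρ, hρ]
    group
  have hform2 : μnx = g⁻¹ * α⁻¹ * g⁻¹ := by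
    rw [hμnxμxinv, hμxeq]
    group
  refine ⟨fun y hy ay hayU hayo b hbU hbo =>
    LMSAux.mu_special h0 hτ hsp hμx hy hayU hayo hbU hbo, ⟨hμxx.symm, h2b⟩, ?_⟩
  conv_rhs => rw [hform1]
  rw [hform2]
  group
end
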